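/- arXiv:1004.1268 — 2 statements merged into one kernel-verified Lean document; each statement's English description precedes it below -/
import Mathlib

section
/- The curvature tensor of the connection Γ^μ_{νλ} = −(x_ν δ^μ_λ + δ^μ_ν x_λ)/(x·x) on {x ∈ ℝ⁴ : x·x < 0} equals R^μ_{νλσ} = l⁻²(g_{νλ}δ^μ_σ − g_{νσ}δ^μ_λ), where g_{μν} = (l²/(x·x)²)(η_{μρ}η_{ντ} − η_{μν}η_{ρτ})x^ρx^τ; consequently the Ricci tensor satisfies R_{μν} = 3l⁻²g_{μν}. -/
open scoped BigOperators

/-- Sign of the Minkowski metric η = diag(1,-1,-1,-1). -/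
def etaS (μ : Fin 4) : ℝ := if μ = 0 then 1 else -1

/-- Minkowski metric components η_{μν}. -/
def etaM (μ ν : Fin 4) : ℝ := if μ = ν then etaS μ else 0

/-- Minkowski inner product x·y = η_{μν}x^μy^ν. -/
def mdot (x y : Fin 4 → ℝ) : ℝ := ∑ μ, etaS μ * x μ * y μ

/-- Lowered components x_μ = η_{μν}x^ν. -/
def lowerIdx (x : Fin 4 → ℝ) (μ : Fin 4) : ℝ := etaS μ * x μ

/-- Connection coefficients Γ^μ_{νλ}(x) = −(x_ν δ^μ_λ + δ^μ_ν x_λ)/(x·x). -/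
noncomputable def Gam (x : Fin 4 → ℝ) (μ ν lam : Fin 4) : ℝ :=
  -((lowerIdx x ν) * (if μ = lam then (1:ℝ) else 0)
    + (if μ = ν then (1:ℝ) else 0) * lowerIdx x lam) / mdot x x

/-- The degenerate metric, sign `s`: g_{μν} = s·(l²/(x·x)²)(η_{μρ}η_{ντ} − η_{μν}η_{ρτ})x^ρx^τ. -/
noncomputable def gten (l s : ℝ) (x : Fin 4 → ℝ) (μ ν : Fin 4) : ℝ :=
  s * (l ^ 2 / (mdot x x) ^ 2) *
    ∑ ρ, ∑ τ, (etaM μ ρ * etaM ν τ - etaM μ ν * etaM ρ τ) * x ρ * x τ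

/-- The degenerate (2,0)-tensor h^{μν} = l⁻⁴(x·x)x^μx^ν. -/
noncomputable def hten (l : ℝ) (x : Fin 4 → ℝ) (μ ν : Fin 4) : ℝ :=
  (1 / l ^ 4) * mdot x x * x μ * x ν

/-- Partial derivative ∂_μ f at x. -/
noncomputable def pd (f : (Fin 4 → ℝ) → ℝ) (μ : Fin 4) (x : Fin 4 → ℝ) : ℝ :=
  fderiv ℝ f x (Pi.single μ 1)

/-- Curvature R^μ_{νλσ} = ∂_λΓ^μ_{σν} − ∂_σΓ^μ_{λν} + Γ^μ_{λκ}Γ^κ_{σν} − Γ^μ_{σκ}Γ^κ_{λν}. -/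
noncomputable def curv (x : Fin 4 → ℝ) (μ ν lam σ : Fin 4) : ℝ :=
  pd (fun p => Gam p μ σ ν) lam x - pd (fun p => Gam p μ lam ν) σ x
    + ∑ κ, (Gam x μ lam κ * Gam x κ σ ν - Gam x μ σ κ * Gam x κ lam ν)

/-! The connection is the projective change `Γ^μ_{νλ} = δ^μ_λ ψ_ν + δ^μ_ν ψ_λ` of the flat
connection by the closed 1-form `ψ_ν = -x_ν/(x·x) = -½ ∂_ν log |x·x|`. For any such change the
quadratic terms collapse and `R^μ_{νλσ} = δ^μ_σ P_{νλ} - δ^μ_λ P_{νσ}` with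
`P_{νλ} = ∂_λψ_ν - ψ_νψ_λ`. Here `∂_λψ_ν = (2x_νx_λ - η_{νλ} x·x)/(x·x)²`, so
`P_{νλ} = (x_νx_λ - η_{νλ} x·x)/(x·x)² = l⁻² g_{νλ}`, and contracting `μ` with `σ` gives the
Ricci tensor `(4 - 1) P`. -/

section PartialDerivative

variable {x : Fin 4 → ℝ} {f g : (Fin 4 → ℝ) → ℝ}

lemma pd_apply (ν μ : Fin 4) : pd (fun p => p ν) μ x = if ν = μ then 1 else 0 := by
  simp [pd, (hasFDerivAt_apply ν x).fderiv, Pi.single_apply]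

lemma pd_add (hf : DifferentiableAt ℝ f x) (hg : DifferentiableAt ℝ g x) (μ : Fin 4) :
    pd (fun p => f p + g p) μ x = pd f μ x + pd g μ x := by
  simp [pd, fderiv_fun_add hf hg]

lemma pd_sum {ι : Type*} (s : Finset ι) {F : ι → (Fin 4 → ℝ) → ℝ}
    (hF : ∀ i ∈ s, DifferentiableAt ℝ (F i) x) (μ : Fin 4) :
    pd (fun p => ∑ i ∈ s, F i p) μ x = ∑ i ∈ s, pd (F i) μ x := by
  simp [pd, fderiv_fun_sum hF]

lemma pd_mul (hf : DifferentiableAt ℝ f x) (hg : DifferentiableAt ℝ g x) (μ : Fin 4) :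
    pd (fun p => f p * g p) μ x = f x * pd g μ x + pd f μ x * g x := by
  simp [pd, fderiv_fun_mul hf hg, mul_comm]

lemma pd_neg (μ : Fin 4) : pd (fun p => -f p) μ x = -pd f μ x := by
  simp [pd]

lemma pd_const_mul (hf : DifferentiableAt ℝ f x) (c : ℝ) (μ : Fin 4) :
    pd (fun p => c * f p) μ x = c * pd f μ x := by
  simp [pd, fderiv_const_mul hf]

lemma pd_div (hf : DifferentiableAt ℝ f x) (hg : DifferentiableAt ℝ g x) (hx : g x ≠ 0)
    (μ : Fin 4) :
    pd (fun p => f p / g p) μ x = (pd f μ x * g x - f x * pd g μ x) / g x ^ 2 := by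
  have h := hf.hasFDerivAt.fun_mul ((hasDerivAt_inv hx).comp_hasFDerivAt x hg.hasFDerivAt)
  simp only [div_eq_mul_inv]
  rw [pd, show (fun p => f p * (g p)⁻¹) = fun p => f p * ((·⁻¹) ∘ g) p from rfl, h.fderiv]
  simp only [pd, Function.comp_apply, add_apply, smul_apply, smul_eq_mul]
  field_simp
  ring

end PartialDerivative

lemma etaM_comm (μ ν : Fin 4) : etaM μ ν = etaM ν μ := by
  unfold etaM
  split_ifs <;> simp_all

@[fun_prop]
lemma differentiable_lowerIdx (ν : Fin 4) : Differentiable ℝ (fun p => lowerIdx p ν) := by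
  unfold lowerIdx
  fun_prop

@[fun_prop]
lemma differentiable_mdot_self : Differentiable ℝ (fun p => mdot p p) := by
  unfold mdot
  fun_prop

lemma pd_lowerIdx (x : Fin 4 → ℝ) (ν μ : Fin 4) :
    pd (fun p => lowerIdx p ν) μ x = etaM ν μ := by
  simp (disch := fun_prop) only [lowerIdx, pd_const_mul, pd_apply, etaM, mul_ite, mul_one,
    mul_zero]

lemma pd_mdot_self (x : Fin 4 → ℝ) (μ : Fin 4) :
    pd (fun p => mdot p p) μ x = 2 * lowerIdx x μ := by
  change pd (fun p => ∑ i, lowerIdx p i * p i) μ x = _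
  rw [pd_sum _ (fun i _ => by fun_prop)]
  simp (disch := fun_prop) only [pd_mul, pd_lowerIdx, pd_apply]
  simp only [etaM, lowerIdx, mul_ite, ite_mul, mul_one, mul_zero, zero_mul,
    Finset.sum_add_distrib, Finset.sum_ite_eq', Finset.mem_univ, if_true]
  ring

lemma gten_one_eq (l : ℝ) (x : Fin 4 → ℝ) (μ ν : Fin 4) :
    gten l 1 x μ ν
      = l ^ 2 / mdot x x ^ 2 * (lowerIdx x μ * lowerIdx x ν - etaM μ ν * mdot x x) := by
  have hlower : ∀ μ, ∑ ρ, etaM μ ρ * x ρ = lowerIdx x μ := by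
    simp [etaM, lowerIdx, ite_mul]
  have hmdot : ∑ ρ, ∑ τ, etaM ρ τ * x ρ * x τ = mdot x x := by
    simp [etaM, mdot, ite_mul]
  have hsplit : ∀ ρ τ, (etaM μ ρ * etaM ν τ - etaM μ ν * etaM ρ τ) * x ρ * x τ
      = etaM μ ρ * x ρ * (etaM ν τ * x τ) - etaM μ ν * (etaM ρ τ * x ρ * x τ) := by
    intros
    ring
  simp only [gten, one_mul, hsplit, Finset.sum_sub_distrib, ← Finset.mul_sum, ← Finset.sum_mul,
    hlower, hmdot]

noncomputable def curvature (Γ : (Fin 4 → ℝ) → Fin 4 → Fin 4 → Fin 4 → ℝ) (x : Fin 4 → ℝ)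
    (μ ν lam σ : Fin 4) : ℝ :=
  pd (fun p => Γ p μ σ ν) lam x - pd (fun p => Γ p μ lam ν) σ x
    + ∑ κ, (Γ x μ lam κ * Γ x κ σ ν - Γ x μ σ κ * Γ x κ lam ν)

noncomputable def projConn (ψ : (Fin 4 → ℝ) → Fin 4 → ℝ) (p : Fin 4 → ℝ) (μ ν lam : Fin 4) :
    ℝ :=
  (if μ = lam then 1 else 0) * ψ p ν + (if μ = ν then 1 else 0) * ψ p lam

noncomputable def projSchouten (ψ : (Fin 4 → ℝ) → Fin 4 → ℝ) (x : Fin 4 → ℝ) (ν lam : Fin 4) :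
    ℝ :=
  pd (fun p => ψ p ν) lam x - ψ x ν * ψ x lam

theorem curvature_projConn {ψ : (Fin 4 → ℝ) → Fin 4 → ℝ} {x : Fin 4 → ℝ}
    (hψ : ∀ ν, DifferentiableAt ℝ (fun p => ψ p ν) x)
    (hclosed : ∀ ν lam, pd (fun p => ψ p ν) lam x = pd (fun p => ψ p lam) ν x)
    (μ ν lam σ : Fin 4) :
    curvature (projConn ψ) x μ ν lam σ =
      (if μ = σ then 1 else 0) * projSchouten ψ x ν lam
        - (if μ = lam then 1 else 0) * projSchouten ψ x ν σ := by
  unfold curvature projConn projSchouten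
  rw [pd_add (by fun_prop) (by fun_prop), pd_add (by fun_prop) (by fun_prop)]
  simp only [pd_const_mul (hψ _)]
  simp only [ite_mul, one_mul, zero_mul, mul_add, mul_ite, add_mul,
    mul_zero, Finset.sum_sub_distrib, Finset.sum_add_distrib, Finset.sum_ite_eq',
    Finset.mem_univ, if_true]
  rw [hclosed σ lam]
  split_ifs <;> ring

noncomputable def psi (p : Fin 4 → ℝ) (ν : Fin 4) : ℝ := -lowerIdx p ν / mdot p p

lemma Gam_eq_projConn_psi : Gam = projConn psi := by
  funext p μ ν lam
  simp only [Gam, projConn, psi]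
  ring

lemma differentiableAt_psi {x : Fin 4 → ℝ} (hx : mdot x x ≠ 0) (ν : Fin 4) :
    DifferentiableAt ℝ (fun p => psi p ν) x := by
  unfold psi
  fun_prop (disch := exact hx)

lemma pd_psi {x : Fin 4 → ℝ} (hx : mdot x x ≠ 0) (ν lam : Fin 4) :
    pd (fun p => psi p ν) lam x
      = (2 * lowerIdx x ν * lowerIdx x lam - etaM ν lam * mdot x x) / mdot x x ^ 2 := by
  change pd (fun p => -lowerIdx p ν / mdot p p) lam x = _
  rw [pd_div (by fun_prop) differentiable_mdot_self.differentiableAt hx, pd_neg, pd_lowerIdx,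
    pd_mdot_self]
  ring

lemma projSchouten_psi {l : ℝ} (hl : l ≠ 0) {x : Fin 4 → ℝ} (hx : mdot x x ≠ 0)
    (ν lam : Fin 4) : projSchouten psi x ν lam = 1 / l ^ 2 * gten l 1 x ν lam := by
  rw [projSchouten, pd_psi hx, gten_one_eq]
  simp only [psi]
  field_simp
  ring

lemma curv_eq_gten {l : ℝ} (hl : l ≠ 0) {x : Fin 4 → ℝ} (hx : mdot x x ≠ 0)
    (μ ν lam σ : Fin 4) :
    curv x μ ν lam σ =
      (1 / l ^ 2) * (gten l 1 x ν lam * (if μ = σ then (1:ℝ) else 0)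
        - gten l 1 x ν σ * (if μ = lam then (1:ℝ) else 0)) := by
  have hclosed : ∀ ν lam, pd (fun p => psi p ν) lam x = pd (fun p => psi p lam) ν x := by
    intro ν lam
    rw [pd_psi hx, pd_psi hx, etaM_comm]
    ring
  change curvature Gam x μ ν lam σ = _
  rw [Gam_eq_projConn_psi, curvature_projConn (differentiableAt_psi hx) hclosed,
    projSchouten_psi hl hx, projSchouten_psi hl hx]
  ring

/-- On {x·x < 0} the curvature of Γ equals l⁻²(g_{νλ}δ^μ_σ − g_{νσ}δ^μ_λ) with
g = g⁺ (sign +1), and the Ricci tensor R_{μν} = R^λ_{μνλ} equals 3l⁻²g_{μν}. -/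
theorem curvature_constant (l : ℝ) (hl : 0 < l) :
    ∀ x : Fin 4 → ℝ, mdot x x < 0 →
      (∀ μ ν lam σ : Fin 4, curv x μ ν lam σ =
        (1 / l ^ 2) * (gten l 1 x ν lam * (if μ = σ then (1:ℝ) else 0)
          - gten l 1 x ν σ * (if μ = lam then (1:ℝ) else 0))) ∧
      (∀ μ ν : Fin 4, (∑ lam, curv x lam μ ν lam) = 3 * (1 / l ^ 2) * gten l 1 x μ ν) := by
  intro x hx
  have hcurv := curv_eq_gten hl.ne' hx.ne
  refine ⟨hcurv, fun μ ν => ?_⟩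
  simp only [hcurv, Finset.sum_sub_distrib, ← Finset.mul_sum, mul_ite, mul_one, mul_zero,
    if_true, Finset.sum_const, Finset.card_univ, Fintype.card_fin, nsmul_eq_mul,
    Finset.sum_ite_eq', Finset.mem_univ]
  ring
end

section
/- At every point x with x·x ≠ 0, the 4×4 matrix g_{μν}(x) = −(l²/(x·x)²)(η_{μρ}η_{ντ} − η_{μν}η_{ρτ})x^ρx^τ has rank exactly 3, and the matrix h^{μν}(x) = l⁻⁴(x·x)x^μx^ν has rank exactly 1. -/
open scoped BigOperators

/-!
With c = l²/(x·x)² and x♭ = ηx, the matrix g is the invertible diagonal matrix -s·c·η times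
(x·x)·1 - x x♭ᵀ. Since x♭·x = x·x ≠ 0, the kernel of the latter is exactly the line through x,
so its rank is 4 - 1 = 3. The matrix h is the nonzero multiple l⁻⁴(x·x) of x xᵀ, of rank 1.
-/

namespace Matrix

variable {K n : Type*} [Field K] [Fintype n] [DecidableEq n]

theorem rank_ne_zero_of_ne_zero {m : Type*} {A : Matrix m n K} (hA : A ≠ 0) : A.rank ≠ 0 := by
  intro h
  rw [rank, Submodule.finrank_eq_zero, LinearMap.range_eq_bot] at h
  exact hA (Matrix.toLin'.injective (by rw [toLin'_apply', h, map_zero]))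

theorem rank_vecMulVec_of_ne_zero {u v : n → K} (hu : u ≠ 0) (hv : v ≠ 0) :
    (vecMulVec u v).rank = 1 :=
  le_antisymm (rank_vecMulVec_le u v)
    (Nat.one_le_iff_ne_zero.mpr (rank_ne_zero_of_ne_zero (vecMulVec_ne_zero hu hv)))

theorem mulVec_smul_one_sub_vecMulVec (u w v : n → K) :
    ((w ⬝ᵥ u) • (1 : Matrix n n K) - vecMulVec u w) *ᵥ v = (w ⬝ᵥ u) • v - (w ⬝ᵥ v) • u := by
  rw [sub_mulVec, smul_mulVec, one_mulVec, vecMulVec_mulVec, op_smul_eq_smul]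

theorem ker_smul_one_sub_vecMulVec {u w : n → K} (h : w ⬝ᵥ u ≠ 0) :
    LinearMap.ker ((w ⬝ᵥ u) • (1 : Matrix n n K) - vecMulVec u w).mulVecLin = K ∙ u := by
  ext v
  rw [LinearMap.mem_ker, mulVecLin_apply, mulVec_smul_one_sub_vecMulVec, sub_eq_zero,
    Submodule.mem_span_singleton]
  constructor
  · intro hv
    exact ⟨(w ⬝ᵥ u)⁻¹ * (w ⬝ᵥ v), by rw [mul_smul, ← hv, inv_smul_smul₀ h]⟩
  · rintro ⟨a, rfl⟩
    rw [dotProduct_smul, smul_eq_mul, mul_smul, smul_comm]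

theorem rank_smul_one_sub_vecMulVec {u w : n → K} (h : w ⬝ᵥ u ≠ 0) :
    ((w ⬝ᵥ u) • (1 : Matrix n n K) - vecMulVec u w).rank = Fintype.card n - 1 := by
  have hu : u ≠ 0 := by rintro rfl; simp at h
  have := LinearMap.finrank_range_add_finrank_ker
    ((w ⬝ᵥ u) • (1 : Matrix n n K) - vecMulVec u w).mulVecLin
  rw [ker_smul_one_sub_vecMulVec h, finrank_span_singleton hu,
    Module.finrank_fintype_fun_eq_card] at this
  rw [rank]
  omega

end Matrix

open Matrix

theorem etaS_ne_zero (μ : Fin 4) : etaS μ ≠ 0 := by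
  unfold etaS; split_ifs <;> norm_num

theorem sum_etaM_mul (μ : Fin 4) (f : Fin 4 → ℝ) : ∑ ν, etaM μ ν * f ν = etaS μ * f μ := by
  simp [etaM]

theorem lowerIdx_dotProduct (x : Fin 4 → ℝ) : lowerIdx x ⬝ᵥ x = mdot x x := by
  simp [dotProduct, lowerIdx, mdot]

theorem ne_zero_of_mdot_self_ne_zero {x : Fin 4 → ℝ} (hx : mdot x x ≠ 0) : x ≠ 0 := by
  rintro rfl; simp [mdot] at hx

theorem gten_apply (l s : ℝ) (x : Fin 4 → ℝ) (μ ν : Fin 4) :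
    gten l s x μ ν =
      s * (l ^ 2 / mdot x x ^ 2) * (lowerIdx x μ * lowerIdx x ν - etaM μ ν * mdot x x) := by
  simp only [gten, sub_mul, Finset.sum_sub_distrib, mul_assoc, ← Finset.mul_sum, sum_etaM_mul]
  simp only [lowerIdx, mdot, mul_assoc]
  ring

theorem of_gten_eq_diagonal_mul (l s : ℝ) (x : Fin 4 → ℝ) :
    Matrix.of (gten l s x) = diagonal (fun μ => -(s * (l ^ 2 / mdot x x ^ 2)) * etaS μ) *
      ((lowerIdx x ⬝ᵥ x) • (1 : Matrix (Fin 4) (Fin 4) ℝ) - vecMulVec x (lowerIdx x)) := by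
  ext μ ν
  rw [of_apply, gten_apply, diagonal_mul, lowerIdx_dotProduct]
  simp only [etaM, lowerIdx, vecMulVec_apply, Matrix.sub_apply, Matrix.smul_apply, one_apply,
    smul_eq_mul]
  split_ifs with h
  · subst h; ring
  · ring

theorem rank_gten {l s : ℝ} (hl : l ≠ 0) (hs : s ≠ 0) {x : Fin 4 → ℝ} (hx : mdot x x ≠ 0) :
    (Matrix.of (gten l s x)).rank = 3 := by
  have hdiag : (diagonal (fun μ => -(s * (l ^ 2 / mdot x x ^ 2)) * etaS μ)).det ≠ 0 := by
    rw [det_diagonal, Finset.prod_ne_zero_iff]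
    intro μ _
    simp [hl, hs, hx, etaS_ne_zero]
  rw [of_gten_eq_diagonal_mul, rank_mul_eq_right_of_det_ne_zero _ _ hdiag,
    rank_smul_one_sub_vecMulVec (by rwa [lowerIdx_dotProduct]), Fintype.card_fin]

theorem of_hten_eq_smul_vecMulVec (l : ℝ) (x : Fin 4 → ℝ) :
    Matrix.of (hten l x) = (1 / l ^ 4 * mdot x x) • vecMulVec x x := by
  ext μ ν
  simp [hten, vecMulVec_apply, mul_assoc]

theorem rank_hten {l : ℝ} (hl : l ≠ 0) {x : Fin 4 → ℝ} (hx : mdot x x ≠ 0) :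
    (Matrix.of (hten l x)).rank = 1 := by
  have hx0 := ne_zero_of_mdot_self_ne_zero hx
  rw [of_hten_eq_smul_vecMulVec,
    rank_smul_of_mem_nonZeroDivisors _ (mem_nonZeroDivisors_of_ne_zero (by positivity)),
    rank_vecMulVec_of_ne_zero hx0 hx0]

/-- At every point with x·x ≠ 0, the matrix g⁻_{μν} has rank exactly 3, and the
matrix h^{μν} has rank exactly 1. -/
theorem gten_hten_rank (l : ℝ) (hl : 0 < l) :
    ∀ x : Fin 4 → ℝ, mdot x x ≠ 0 →
      (Matrix.of (fun μ ν => gten l (-1) x μ ν)).rank = 3 ∧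
      (Matrix.of (fun μ ν => hten l x μ ν)).rank = 1 :=
  fun _ hx => ⟨rank_gten hl.ne' (by norm_num) hx, rank_hten hl.ne' hx⟩
end
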